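/- Let F := (ZMod 2)[X]/(X^11 + X^2 + 1), x the residue of X, and α := x^89. Then the elements 1, α, α^2, ..., α^10 are linearly independent over ZMod 2; equivalently, {α^i : 0 ≤ i ≤ 10} forms a basis of F as a vector space over ZMod 2. -/

import Mathlib

open Polynomial

noncomputable abbrev F : Type := AdjoinRoot (X ^ 11 + X ^ 2 + 1 : (ZMod 2)[X])

noncomputable abbrev α : F := (AdjoinRoot.root (X ^ 11 + X ^ 2 + 1 : (ZMod 2)[X])) ^ 89

private lemma sum11 {M : Type*} [AddCommMonoid M] (f : Fin 11 → M) :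
    ∑ i, f i = f 0 + f 1 + f 2 + f 3 + f 4 + f 5 + f 6 + f 7 + f 8 + f 9 + f 10 := by
  simp [Fin.sum_univ_succ, add_assoc]

set_option maxHeartbeats 1000000 in
theorem stmt_8 : LinearIndependent (ZMod 2) (fun i : Fin 11 => α ^ (i : ℕ)) := by
  have hm : (X ^ 11 + X ^ 2 + 1 : (ZMod 2)[X]).Monic := by monicity!
  have hd : (X ^ 11 + X ^ 2 + 1 : (ZMod 2)[X]).natDegree = 11 := by compute_degree!
  set x : F := AdjoinRoot.root (X ^ 11 + X ^ 2 + 1 : (ZMod 2)[X]) with hxdef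
  have hp : x ^ 11 + x ^ 2 + 1 = 0 := by
    have h := AdjoinRoot.eval₂_root (X ^ 11 + X ^ 2 + 1 : (ZMod 2)[X])
    simpa using h
  have h2 : (2 : F) = 0 := by
    have h0 : algebraMap (ZMod 2) F 2 = (2 : F) := map_ofNat _ 2
    rw [show (2 : ZMod 2) = 0 from rfl, map_zero] at h0
    exact h0.symm
  have hli : LinearIndependent (ZMod 2) (fun j : Fin 11 => x ^ (j : ℕ)) := by
    have h := (AdjoinRoot.powerBasis' hm).basis.linearIndependent
    rw [PowerBasis.coe_basis] at h
    exact h.comp (finCongr hd.symm) (finCongr hd.symm).injective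
  have ha1 : α = x ^ 8 + x ^ 6 + x := by
    show x ^ 89 = x ^ 8 + x ^ 6 + x
    linear_combination (x ^ 78 + x ^ 69 + x ^ 67 + x ^ 60 + x ^ 56 + x ^ 51 + x ^ 49 + x ^ 47 + x ^ 45 + x ^ 42 + x ^ 34 + x ^ 33 + x ^ 31 + x ^ 25 + x ^ 24 + x ^ 23 + x ^ 20 + x ^ 16 + x ^ 15 + x ^ 13 + x ^ 12 + x ^ 11 + x ^ 9 + x ^ 7 + x ^ 6 + x ^ 5 + x ^ 3 + x) * hp + ((-1:F)*x ^ 80 + (-1:F)*x ^ 78 + (-1:F)*x ^ 71 + (-1:F)*x ^ 69 + (-1:F)*x ^ 67 + (-1:F)*x ^ 62 + (-1:F)*x ^ 60 + (-1:F)*x ^ 58 + (-1:F)*x ^ 56 + (-1:F)*x ^ 53 + (-1:F)*x ^ 51 + (-1:F)*x ^ 49 + (-1:F)*x ^ 47 + (-1:F)*x ^ 45 + (-1:F)*x ^ 44 + (-1:F)*x ^ 42 + (-1:F)*x ^ 36 + (-1:F)*x ^ 35 + (-1:F)*x ^ 34 + (-1:F)*x ^ 33 + (-1:F)*x ^ 31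 + (-1:F)*x ^ 27 + (-1:F)*x ^ 26 + (-1:F)*x ^ 25 + (-1:F)*x ^ 24 + (-1:F)*x ^ 23 + (-1:F)*x ^ 22 + (-1:F)*x ^ 20 + (-1:F)*x ^ 18 + (-1:F)*x ^ 17 + (-1:F)*x ^ 16 + (-1:F)*x ^ 15 + (-1:F)*x ^ 14 + (-1:F)*x ^ 13 + (-1:F)*x ^ 12 + (-1:F)*x ^ 11 + (-1:F)*x ^ 9 + (-1:F)*x ^ 8 + (-1:F)*x ^ 7 + (-1:F)*x ^ 6 + (-1:F)*x ^ 5 + (-1:F)*x ^ 3 + (-1:F)*x) * h2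
  have ha2 : α ^ 2 = x ^ 7 + x ^ 5 + x ^ 3 + x ^ 2 + x := by
    show (x ^ 89) ^ 2 = x ^ 7 + x ^ 5 + x ^ 3 + x ^ 2 + x
    linear_combination (x ^ 89) * ha1 + (x ^ 8 + x ^ 6 + x) * ha1 + (x ^ 5 + x) * hp + (x ^ 14 + x ^ 9 + (-1:F)*x ^ 5 + (-1:F)*x ^ 3 + (-1:F)*x) * h2
  have ha3 : α ^ 3 = x ^ 10 + x ^ 7 + x ^ 3 + x ^ 2 := by
    show (x ^ 89) ^ 3 = x ^ 10 + x ^ 7 + x ^ 3 + x ^ 2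
    linear_combination (x ^ 89) * ha2 + (x ^ 7 + x ^ 5 + x ^ 3 + x ^ 2 + x) * ha1 + (x ^ 4) * hp + (x ^ 13 + x ^ 11 + x ^ 9 + x ^ 8) * h2
  have ha4 : α ^ 4 = x ^ 10 + x ^ 6 + x ^ 5 + x ^ 4 + x ^ 3 + x ^ 2 := by
    show (x ^ 89) ^ 4 = x ^ 10 + x ^ 6 + x ^ 5 + x ^ 4 + x ^ 3 + x ^ 2
    linear_combination (x ^ 89) * ha3 + (x ^ 10 + x ^ 7 + x ^ 3 + x ^ 2) * ha1 + (x ^ 7 + x ^ 5 + x ^ 4 + x ^ 2) * hp + (x ^ 11 + x ^ 8 + (-1:F)*x ^ 7 + (-1:F)*x ^ 6 + (-1:F)*x ^ 5 + (-1:F)*x ^ 4 + (-1:F)*x ^ 2) * h2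
  have ha5 : α ^ 5 = x ^ 8 + x ^ 7 + x ^ 6 + x ^ 5 + (1:F) := by
    show (x ^ 89) ^ 5 = x ^ 8 + x ^ 7 + x ^ 6 + x ^ 5 + (1:F)
    linear_combination (x ^ 89) * ha4 + (x ^ 10 + x ^ 6 + x ^ 5 + x ^ 4 + x ^ 3 + x ^ 2) * ha1 + (x ^ 7 + x ^ 5 + x ^ 3 + x ^ 2 + (1:F)) * hp + (x ^ 12 + x ^ 11 + x ^ 10 + (-1:F)*x ^ 7 + (-1:F)*x ^ 5 + (-1:F)*x ^ 2 + (-1:F)) * h2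
  have ha6 : α ^ 6 = x ^ 9 + x ^ 6 + x ^ 5 + x ^ 4 + x ^ 3 + x ^ 2 + (1:F) := by
    show (x ^ 89) ^ 6 = x ^ 9 + x ^ 6 + x ^ 5 + x ^ 4 + x ^ 3 + x ^ 2 + (1:F)
    linear_combination (x ^ 89) * ha5 + (x ^ 8 + x ^ 7 + x ^ 6 + x ^ 5 + (1:F)) * ha1 + (x ^ 5 + x ^ 4 + x + (1:F)) * hp + (x ^ 14 + x ^ 13 + x ^ 8 + (-1:F)*x ^ 5 + (-1:F)*x ^ 4 + (-1:F)*x ^ 3 + (-1:F)*x ^ 2 + (-1:F)) * h2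
  have ha7 : α ^ 7 = x ^ 10 + x ^ 9 + x ^ 8 + x ^ 7 + x ^ 4 + x ^ 2 + x := by
    show (x ^ 89) ^ 7 = x ^ 10 + x ^ 9 + x ^ 8 + x ^ 7 + x ^ 4 + x ^ 2 + x
    linear_combination (x ^ 89) * ha6 + (x ^ 9 + x ^ 6 + x ^ 5 + x ^ 4 + x ^ 3 + x ^ 2 + (1:F)) * ha1 + (x ^ 6 + x ^ 4 + x ^ 3 + x ^ 2) * hp + (x ^ 12 + x ^ 11 + x ^ 10 + (-1:F)*x ^ 4 + (-1:F)*x ^ 2) * h2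
  have ha8 : α ^ 8 = x ^ 10 + x ^ 9 + x ^ 8 + x ^ 6 + x ^ 4 + x ^ 3 + x ^ 2 + x + (1:F) := by
    show (x ^ 89) ^ 8 = x ^ 10 + x ^ 9 + x ^ 8 + x ^ 6 + x ^ 4 + x ^ 3 + x ^ 2 + x + (1:F)
    linear_combination (x ^ 89) * ha7 + (x ^ 10 + x ^ 9 + x ^ 8 + x ^ 7 + x ^ 4 + x ^ 2 + x) * ha1 + (x ^ 7 + x ^ 6 + x ^ 3 + x ^ 2 + x + (1:F)) * hp + (x ^ 16 + x ^ 15 + x ^ 10 + (-1:F)*x ^ 6 + (-1:F)*x ^ 4 + (-1:F)*x ^ 3 + (-1:F)*x ^ 2 + (-1:F)*x + (-1:F)) * h2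
  have ha9 : α ^ 9 = x ^ 10 + x ^ 8 + x ^ 7 + x ^ 6 + x ^ 5 + x ^ 3 + x ^ 2 + x := by
    show (x ^ 89) ^ 9 = x ^ 10 + x ^ 8 + x ^ 7 + x ^ 6 + x ^ 5 + x ^ 3 + x ^ 2 + x
    linear_combination (x ^ 89) * ha8 + (x ^ 10 + x ^ 9 + x ^ 8 + x ^ 6 + x ^ 4 + x ^ 3 + x ^ 2 + x + (1:F)) * ha1 + (x ^ 7 + x ^ 6 + x ^ 4) * hp + (x ^ 16 + x ^ 14 + x ^ 12 + x ^ 11 + x ^ 10 + x ^ 9 + (-1:F)*x ^ 6) * h2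
  have ha10 : α ^ 10 = x ^ 10 + x ^ 7 + x + (1:F) := by
    show (x ^ 89) ^ 10 = x ^ 10 + x ^ 7 + x + (1:F)
    linear_combination (x ^ 89) * ha9 + (x ^ 10 + x ^ 8 + x ^ 7 + x ^ 6 + x ^ 5 + x ^ 3 + x ^ 2 + x) * ha1 + (x ^ 7 + x ^ 4 + x + (1:F)) * hp + (x ^ 16 + x ^ 14 + x ^ 13 + x ^ 11 + x ^ 9 + x ^ 8 + (-1:F)*x + (-1:F)) * h2
  rw [Fintype.linearIndependent_iff]
  have h2z : (2 : ZMod 2) = 0 := by decide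
  intro c hc
  simp only [sum11] at hc
  simp only [show (((0:Fin 11)):ℕ) = 0 from rfl, show (((1:Fin 11)):ℕ) = 1 from rfl, show (((2:Fin 11)):ℕ) = 2 from rfl, show (((3:Fin 11)):ℕ) = 3 from rfl, show (((4:Fin 11)):ℕ) = 4 from rfl, show (((5:Fin 11)):ℕ) = 5 from rfl, show (((6:Fin 11)):ℕ) = 6 from rfl, show (((7:Fin 11)):ℕ) = 7 from rfl, show (((8:Fin 11)):ℕ) = 8 from rfl, show (((9:Fin 11)):ℕ) = 9 from rfl, show (((10:Fin 11)):ℕ) = 10 from rfl] at hc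
  rw [pow_zero, pow_one, ha2, ha3, ha4, ha5, ha6, ha7, ha8, ha9, ha10, ha1] at hc
  have hg : ∑ j : Fin 11, (![(c 0 + c 5 + c 6 + c 8 + c 10), (c 1 + c 2 + c 7 + c 8 + c 9 + c 10), (c 2 + c 3 + c 4 + c 6 + c 7 + c 8 + c 9), (c 2 + c 3 + c 4 + c 6 + c 8 + c 9), (c 4 + c 6 + c 7 + c 8), (c 2 + c 4 + c 5 + c 6 + c 9), (c 1 + c 4 + c 5 + c 6 + c 8 + c 9), (c 2 + c 3 + c 5 + c 7 + c 9 + c 10), (c 1 + c 5 + c 7 + c 8 + c 9), (c 6 + c 7 + c 8), (c 3 + c 4 + c 7 + c 8 + c 9 + c 10)] : Fin 11 → ZMod 2) j • x ^ (j : ℕ) = 0 := by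
    simp only [sum11]
    simp only [show (((0:Fin 11)):ℕ) = 0 from rfl, show (((1:Fin 11)):ℕ) = 1 from rfl, show (((2:Fin 11)):ℕ) = 2 from rfl, show (((3:Fin 11)):ℕ) = 3 from rfl, show (((4:Fin 11)):ℕ) = 4 from rfl, show (((5:Fin 11)):ℕ) = 5 from rfl, show (((6:Fin 11)):ℕ) = 6 from rfl, show (((7:Fin 11)):ℕ) = 7 from rfl, show (((8:Fin 11)):ℕ) = 8 from rfl, show (((9:Fin 11)):ℕ) = 9 from rfl, show (((10:Fin 11)):ℕ) = 10 from rfl]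
    simp only [show (![(c 0 + c 5 + c 6 + c 8 + c 10), (c 1 + c 2 + c 7 + c 8 + c 9 + c 10), (c 2 + c 3 + c 4 + c 6 + c 7 + c 8 + c 9), (c 2 + c 3 + c 4 + c 6 + c 8 + c 9), (c 4 + c 6 + c 7 + c 8), (c 2 + c 4 + c 5 + c 6 + c 9), (c 1 + c 4 + c 5 + c 6 + c 8 + c 9), (c 2 + c 3 + c 5 + c 7 + c 9 + c 10), (c 1 + c 5 + c 7 + c 8 + c 9), (c 6 + c 7 + c 8), (c 3 + c 4 + c 7 + c 8 + c 9 + c 10)] : Fin 11 → ZMod 2) 0 = (c 0 + c 5 + c 6 + c 8 + c 10) from rfl, show (![(c 0 + c 5 + c 6 + c 8 + c 10), (c 1 + c 2 + c 7 + c 8 + c 9 + c 10), (c 2 + c 3 + c 4 + c 6 + c 7 + c 8 + c 9), (c 2 + c 3 + c 4 + c 6 + c 8 + c 9), (c 4 + c 6 + c 7 + c 8), (c 2 + c 4 + c 5 + c 6 + c 9), (c 1 + c 4 + c 5 + c 6 + c 8 + c 9), (c 2 + c 3 + c 5 + c 7 + c 9 + c 10), (c 1 + c 5 + c 7 + c 8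 + c 9), (c 6 + c 7 + c 8), (c 3 + c 4 + c 7 + c 8 + c 9 + c 10)] : Fin 11 → ZMod 2) 1 = (c 1 + c 2 + c 7 + c 8 + c 9 + c 10) from rfl, show (![(c 0 + c 5 + c 6 + c 8 + c 10), (c 1 + c 2 + c 7 + c 8 + c 9 + c 10), (c 2 + c 3 + c 4 + c 6 + c 7 + c 8 + c 9), (c 2 + c 3 + c 4 + c 6 + c 8 + c 9), (c 4 + c 6 + c 7 + c 8), (c 2 + c 4 + c 5 + c 6 + c 9), (c 1 + c 4 + c 5 + c 6 + c 8 + c 9), (c 2 + c 3 + c 5 + c 7 + c 9 + c 10), (c 1 + c 5 + c 7 + c 8 + c 9), (c 6 + c 7 + c 8), (c 3 + c 4 + c 7 + c 8 + c 9 + c 10)] : Fin 11 → ZMod 2) 2 = (c 2 + c 3 + c 4 + c 6 + c 7 + c 8 + c 9) from rfl, show (![(c 0 + c 5 + c 6 + c 8 + c 10), (c 1 + c 2 + c 7 + c 8 + c 9 + c 10), (c 2 + c 3 + c 4 + c 6 + c 7 + c 8 + c 9), (c 2 + c 3 + c 4 + c 6 + c 8 + c 9), (c 4 + c 6 + c 7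 + c 8), (c 2 + c 4 + c 5 + c 6 + c 9), (c 1 + c 4 + c 5 + c 6 + c 8 + c 9), (c 2 + c 3 + c 5 + c 7 + c 9 + c 10), (c 1 + c 5 + c 7 + c 8 + c 9), (c 6 + c 7 + c 8), (c 3 + c 4 + c 7 + c 8 + c 9 + c 10)] : Fin 11 → ZMod 2) 3 = (c 2 + c 3 + c 4 + c 6 + c 8 + c 9) from rfl, show (![(c 0 + c 5 + c 6 + c 8 + c 10), (c 1 + c 2 + c 7 + c 8 + c 9 + c 10), (c 2 + c 3 + c 4 + c 6 + c 7 + c 8 + c 9), (c 2 + c 3 + c 4 + c 6 + c 8 + c 9), (c 4 + c 6 + c 7 + c 8), (c 2 + c 4 + c 5 + c 6 + c 9), (c 1 + c 4 + c 5 + c 6 + c 8 + c 9), (c 2 + c 3 + c 5 + c 7 + c 9 + c 10), (c 1 + c 5 + c 7 + c 8 + c 9), (c 6 + c 7 + c 8), (c 3 + c 4 + c 7 + c 8 + c 9 + c 10)] : Fin 11 → ZMod 2) 4 = (c 4 + c 6 + c 7 + c 8) from rfl, show (![(c 0 + c 5 + c 6 + c 8 + c 10), (c 1 + c 2 + c 7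 + c 8 + c 9 + c 10), (c 2 + c 3 + c 4 + c 6 + c 7 + c 8 + c 9), (c 2 + c 3 + c 4 + c 6 + c 8 + c 9), (c 4 + c 6 + c 7 + c 8), (c 2 + c 4 + c 5 + c 6 + c 9), (c 1 + c 4 + c 5 + c 6 + c 8 + c 9), (c 2 + c 3 + c 5 + c 7 + c 9 + c 10), (c 1 + c 5 + c 7 + c 8 + c 9), (c 6 + c 7 + c 8), (c 3 + c 4 + c 7 + c 8 + c 9 + c 10)] : Fin 11 → ZMod 2) 5 = (c 2 + c 4 + c 5 + c 6 + c 9) from rfl, show (![(c 0 + c 5 + c 6 + c 8 + c 10), (c 1 + c 2 + c 7 + c 8 + c 9 + c 10), (c 2 + c 3 + c 4 + c 6 + c 7 + c 8 + c 9), (c 2 + c 3 + c 4 + c 6 + c 8 + c 9), (c 4 + c 6 + c 7 + c 8), (c 2 + c 4 + c 5 + c 6 + c 9), (c 1 + c 4 + c 5 + c 6 + c 8 + c 9), (c 2 + c 3 + c 5 + c 7 + c 9 + c 10), (c 1 + c 5 + c 7 + c 8 + c 9), (c 6 + c 7 + c 8), (c 3 + c 4 + c 7 + c 8 + c 9 +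 c 10)] : Fin 11 → ZMod 2) 6 = (c 1 + c 4 + c 5 + c 6 + c 8 + c 9) from rfl, show (![(c 0 + c 5 + c 6 + c 8 + c 10), (c 1 + c 2 + c 7 + c 8 + c 9 + c 10), (c 2 + c 3 + c 4 + c 6 + c 7 + c 8 + c 9), (c 2 + c 3 + c 4 + c 6 + c 8 + c 9), (c 4 + c 6 + c 7 + c 8), (c 2 + c 4 + c 5 + c 6 + c 9), (c 1 + c 4 + c 5 + c 6 + c 8 + c 9), (c 2 + c 3 + c 5 + c 7 + c 9 + c 10), (c 1 + c 5 + c 7 + c 8 + c 9), (c 6 + c 7 + c 8), (c 3 + c 4 + c 7 + c 8 + c 9 + c 10)] : Fin 11 → ZMod 2) 7 = (c 2 + c 3 + c 5 + c 7 + c 9 + c 10) from rfl, show (![(c 0 + c 5 + c 6 + c 8 + c 10), (c 1 + c 2 + c 7 + c 8 + c 9 + c 10), (c 2 + c 3 + c 4 + c 6 + c 7 + c 8 + c 9), (c 2 + c 3 + c 4 + c 6 + c 8 + c 9), (c 4 + c 6 + c 7 + c 8), (c 2 + c 4 + c 5 + c 6 + c 9), (c 1 + c 4 + c 5 + c 6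 + c 8 + c 9), (c 2 + c 3 + c 5 + c 7 + c 9 + c 10), (c 1 + c 5 + c 7 + c 8 + c 9), (c 6 + c 7 + c 8), (c 3 + c 4 + c 7 + c 8 + c 9 + c 10)] : Fin 11 → ZMod 2) 8 = (c 1 + c 5 + c 7 + c 8 + c 9) from rfl, show (![(c 0 + c 5 + c 6 + c 8 + c 10), (c 1 + c 2 + c 7 + c 8 + c 9 + c 10), (c 2 + c 3 + c 4 + c 6 + c 7 + c 8 + c 9), (c 2 + c 3 + c 4 + c 6 + c 8 + c 9), (c 4 + c 6 + c 7 + c 8), (c 2 + c 4 + c 5 + c 6 + c 9), (c 1 + c 4 + c 5 + c 6 + c 8 + c 9), (c 2 + c 3 + c 5 + c 7 + c 9 + c 10), (c 1 + c 5 + c 7 + c 8 + c 9), (c 6 + c 7 + c 8), (c 3 + c 4 + c 7 + c 8 + c 9 + c 10)] : Fin 11 → ZMod 2) 9 = (c 6 + c 7 + c 8) from rfl, show (![(c 0 + c 5 + c 6 + c 8 + c 10), (c 1 + c 2 + c 7 + c 8 + c 9 + c 10), (c 2 + c 3 + c 4 + c 6 + c 7 + c 8 + c 9), (c 2 + c 3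 + c 4 + c 6 + c 8 + c 9), (c 4 + c 6 + c 7 + c 8), (c 2 + c 4 + c 5 + c 6 + c 9), (c 1 + c 4 + c 5 + c 6 + c 8 + c 9), (c 2 + c 3 + c 5 + c 7 + c 9 + c 10), (c 1 + c 5 + c 7 + c 8 + c 9), (c 6 + c 7 + c 8), (c 3 + c 4 + c 7 + c 8 + c 9 + c 10)] : Fin 11 → ZMod 2) 10 = (c 3 + c 4 + c 7 + c 8 + c 9 + c 10) from rfl]
    simp only [pow_zero, pow_one]
    linear_combination (norm := module) hc
  have hh := Fintype.linearIndependent_iff.mp hli _ hg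
  have hb0 : (c 0 + c 5 + c 6 + c 8 + c 10) = (0 : ZMod 2) := hh 0
  have hb1 : (c 1 + c 2 + c 7 + c 8 + c 9 + c 10) = (0 : ZMod 2) := hh 1
  have hb2 : (c 2 + c 3 + c 4 + c 6 + c 7 + c 8 + c 9) = (0 : ZMod 2) := hh 2
  have hb3 : (c 2 + c 3 + c 4 + c 6 + c 8 + c 9) = (0 : ZMod 2) := hh 3
  have hb4 : (c 4 + c 6 + c 7 + c 8) = (0 : ZMod 2) := hh 4
  have hb5 : (c 2 + c 4 + c 5 + c 6 + c 9) = (0 : ZMod 2) := hh 5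
  have hb6 : (c 1 + c 4 + c 5 + c 6 + c 8 + c 9) = (0 : ZMod 2) := hh 6
  have hb7 : (c 2 + c 3 + c 5 + c 7 + c 9 + c 10) = (0 : ZMod 2) := hh 7
  have hb8 : (c 1 + c 5 + c 7 + c 8 + c 9) = (0 : ZMod 2) := hh 8
  have hb9 : (c 6 + c 7 + c 8) = (0 : ZMod 2) := hh 9
  have hb10 : (c 3 + c 4 + c 7 + c 8 + c 9 + c 10) = (0 : ZMod 2) := hh 10
  have e0 : c 0 = 0 := by linear_combination hb0 + hb2 + hb4 + hb7 + hb9 - (c 2 + c 3 + c 4 + c 5 + (2:ZMod 2) * c 6 + (2:ZMod 2) * c 7 + (2:ZMod 2) * c 8 + c 9 + c 10) * h2z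
  have e1 : c 1 = 0 := by linear_combination hb1 + hb3 + hb5 + hb7 - ((2:ZMod 2) * c 2 + c 3 + c 4 + c 5 + c 6 + c 7 + c 8 + (2:ZMod 2) * c 9 + c 10) * h2z
  have e2 : c 2 = 0 := by linear_combination hb1 + hb3 + hb4 + hb7 + hb8 - (c 1 + c 2 + c 3 + c 4 + c 5 + c 6 + (2:ZMod 2) * c 7 + (2:ZMod 2) * c 8 + (2:ZMod 2) * c 9 + c 10) * h2z
  have e3 : c 3 = 0 := by linear_combination hb1 + hb5 + hb8 + hb9 + hb10 - (c 1 + c 2 + c 4 + c 5 + c 6 + (2:ZMod 2) * c 7 + (2:ZMod 2) * c 8 + (2:ZMod 2) * c 9 + c 10) * h2z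
  have e4 : c 4 = 0 := by linear_combination hb4 + hb9 - (c 6 + c 7 + c 8) * h2z
  have e5 : c 5 = 0 := by linear_combination hb1 + hb3 + hb4 + hb6 + hb9 + hb10 - (c 1 + c 2 + c 3 + (2:ZMod 2) * c 4 + (2:ZMod 2) * c 6 + (2:ZMod 2) * c 7 + (3:ZMod 2) * c 8 + (2:ZMod 2) * c 9 + c 10) * h2z
  have e6 : c 6 = 0 := by linear_combination hb2 + hb3 + hb4 + hb6 + hb8 + hb9 - (c 1 + c 2 + c 3 + (2:ZMod 2) * c 4 + c 5 + (2:ZMod 2) * c 6 + (2:ZMod 2) * c 7 + (3:ZMod 2) * c 8 + (2:ZMod 2) * c 9) * h2z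
  have e7 : c 7 = 0 := by linear_combination hb2 + hb3 - (c 2 + c 3 + c 4 + c 6 + c 8 + c 9) * h2z
  have e8 : c 8 = 0 := by linear_combination hb4 + hb6 + hb8 - (c 1 + c 4 + c 5 + c 6 + c 7 + c 8 + c 9) * h2z
  have e9 : c 9 = 0 := by linear_combination hb2 + hb3 + hb5 + hb7 + hb9 + hb10 - ((2:ZMod 2) * c 2 + (2:ZMod 2) * c 3 + (2:ZMod 2) * c 4 + c 5 + (2:ZMod 2) * c 6 + (2:ZMod 2) * c 7 + (2:ZMod 2) * c 8 + (2:ZMod 2) * c 9 + c 10) * h2z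
  have e10 : c 10 = 0 := by linear_combination hb1 + hb6 + hb7 + hb9 + hb10 - (c 1 + c 2 + c 3 + c 4 + c 5 + c 6 + (2:ZMod 2) * c 7 + (2:ZMod 2) * c 8 + (2:ZMod 2) * c 9 + c 10) * h2z
  intro i
  fin_cases i <;> first
  | exact e0
  | exact e1
  | exact e2
  | exact e3
  | exact e4
  | exact e5
  | exact e6
  | exact e7
  | exact e8
  | exact e9
  | exact e10
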